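/- arXiv:2407.19767 — 2 statements merged into one kernel-verified Lean document; each statement's English description precedes it below -/
import Mathlib

section
/- Let d ≥ 2 and let (a_i)_{i≥1} be a sequence in the field of rational functions ℂ(a_1,...,a_{d-1}) (or any field where all expressions are defined) satisfying the Lyness-type recurrence a_{i+d-1} = 1 - a_{i+d-2}/(1 - a_{i+d-3}/(1 - ⋯ /(1 - a_i))) for all i ≥ 1. Then the sequence is (d+2)-periodic: a_i = a_{i+d+2} for all i ≥ 1. -/
/-- The continued fraction `C_k` over a field `K`: `C_0 = 1`, `C_k = 1 - x_k / C_{k-1}`,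
so that `C_n = 1 - x_n/(1 - x_{n-1}/(⋯ - x_2/(1 - x_1)))`. -/
def contFrac {K : Type*} [Field K] : ℕ → (ℕ → K) → K
  | 0, _ => 1
  | (n + 1), x => 1 - x (n + 1) / contFrac n x

/-- `LynessG a (j+1) i` is the signed continuant `F_j(a_i, …, a_{i+j-1})` with
`F_{-1} = F_0 = 1`, `F_j = F_{j-1} - a_{i+j-1} F_{j-2}`. -/
def LynessG {K : Type*} [Field K] (a : ℕ → K) : ℕ → ℕ → K
  | 0, _ => 1
  | 1, _ => 1
  | (j+2), i => LynessG a (j+1) i - a (i+j) * LynessG a j i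

/-- Dual (first-variable) recurrence for the signed continuants. -/
lemma LynessG_dual {K : Type*} [Field K] (a : ℕ → K) :
    ∀ j i, LynessG a (j+2) i = LynessG a (j+1) (i+1) - a i * LynessG a j (i+2) := by
  intro j
  induction j using Nat.twoStepInduction with
  | zero => intro i; rfl
  | one =>
    intro i
    have h1 : LynessG a (1+2) i = (1 - a (i+0) * 1) - a (i+1) * 1 := rfl
    have h2 : LynessG a (1+1) (i+1) = 1 - a (i+1+0) * 1 := rfl
    have h3 : LynessG a 1 (i+2) = (1 : K) := rfl
    rw [h1, h2, h3, show i+1+0 = i+1 from rfl, show i+0 = i from rfl]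
    ring
  | more j ih ih2 =>
    intro i
    have e1 : LynessG a (j+2+2) i
        = LynessG a (j+3) i - a (i+(j+2)) * LynessG a (j+2) i := rfl
    have e2 : LynessG a (j+3) i
        = LynessG a (j+2) (i+1) - a i * LynessG a (j+1) (i+2) := ih2 i
    have e3 : LynessG a (j+2) i
        = LynessG a (j+1) (i+1) - a i * LynessG a j (i+2) := ih i
    have e4 : LynessG a (j+2+1) (i+1)
        = LynessG a (j+2) (i+1) - a (i+1+(j+1)) * LynessG a (j+1) (i+1) := rfl
    have e5 : LynessG a (j+2) (i+2)
        = LynessG a (j+1) (i+2) - a (i+2+j) * LynessG a j (i+2) := rfl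
    have e6 : a (i+1+(j+1)) = a (i+(j+2)) := by congr 1; omega
    have e7 : a (i+2+j) = a (i+(j+2)) := by congr 1; omega
    rw [e1, e2, e3, e4, e5, e6, e7]
    ring

/-- Lyness periodicity: let `d ≥ 2` and let `(a_i)_{i ≥ 1}` be a sequence in a field `K`
satisfying the Lyness-type recurrence
`a_{i+d-1} = 1 - a_{i+d-2}/(1 - a_{i+d-3}/(⋯ - a_{i+1}/(1 - a_i)))` for all `i ≥ 1`
(the nested continued fraction has depth `d-1`), with all intermediate denominators
nonzero. Then the sequence is `(d+2)`-periodic: `a_i = a_{i+d+2}` for all `i ≥ 1`. -/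
theorem lyness_periodicity {K : Type*} [Field K] (d : ℕ) (hd : 2 ≤ d) (a : ℕ → K)
    (hden : ∀ i, 1 ≤ i → ∀ j, j ≤ d - 2 → contFrac j (fun k => a (i + k - 1)) ≠ 0)
    (hrec : ∀ i, 1 ≤ i → a (i + d - 1) = contFrac (d - 1) (fun k => a (i + k - 1))) :
    ∀ i, 1 ≤ i → a (i + d + 2) = a i := by
  obtain ⟨e, rfl⟩ : ∃ e, d = e + 2 := ⟨d - 2, by omega⟩
  -- nonvanishing and the continued-fraction/continuant relation
  have key : ∀ j, j ≤ e + 1 → ∀ i, 1 ≤ i →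
      LynessG a j i ≠ 0 ∧
        LynessG a (j+1) i = contFrac j (fun k => a (i + k - 1)) * LynessG a j i := by
    intro j
    induction j with
    | zero =>
      intro _ i hi
      refine ⟨one_ne_zero, ?_⟩
      show (1 : K) = 1 * 1
      rw [one_mul]
    | succ j ih =>
      intro hj i hi
      obtain ⟨h0, h1⟩ := ih (by omega) i hi
      have hC : contFrac j (fun k => a (i + k - 1)) ≠ 0 := hden i hi j (by omega)
      have hne : LynessG a (j+1) i ≠ 0 := by rw [h1]; exact mul_ne_zero hC h0
      refine ⟨hne, ?_⟩
      have e1 : LynessG a (j+1+1) i = LynessG a (j+1) i - a (i+j) * LynessG a j i := rfl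
      have e2 : contFrac (j+1) (fun k => a (i+k-1))
          = 1 - a (i+(j+1)-1) / contFrac j (fun k => a (i+k-1)) := rfl
      have e3 : a (i+(j+1)-1) = a (i+j) := rfl
      rw [e1, e2, e3, h1]
      field_simp
  have hG0 : ∀ j, j ≤ e + 1 → ∀ i, 1 ≤ i → LynessG a j i ≠ 0 :=
    fun j hj i hi => (key j hj i hi).1
  -- the recurrence in continuant form : F_d(i) = 0
  have R : ∀ i, 1 ≤ i → LynessG a (e+3) i = 0 := by
    intro i hi
    have h1 := (key (e+1) le_rfl i hi).2
    have h2 : a (i+(e+1)) = contFrac (e+1) (fun k => a (i+k-1)) := hrec i hi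
    have e1 : LynessG a (e+3) i = LynessG a (e+2) i - a (i+(e+1)) * LynessG a (e+1) i := rfl
    have e2 : LynessG a (e+2) i = LynessG a (e+1+1) i := rfl
    rw [e1, e2, h1, h2]
    ring
  have dual := LynessG_dual a
  -- F_{d+1}(i) computed two ways
  have hF4 : ∀ i, 1 ≤ i → LynessG a (e+4) i = -(a (i+(e+2)) * LynessG a (e+2) i) := by
    intro i hi
    have e1 : LynessG a (e+4) i = LynessG a (e+3) i - a (i+(e+2)) * LynessG a (e+2) i := rfl
    rw [e1, R i hi]; ring
  have hstar : ∀ i, 1 ≤ i → LynessG a (e+4) i = -(a i * LynessG a (e+2) (i+2)) := by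
    intro i hi
    have h2 : LynessG a (e+4) i
        = LynessG a (e+3) (i+1) - a i * LynessG a (e+2) (i+2) := dual (e+2) i
    rw [h2, R (i+1) (by omega)]; ring
  -- F_{d+1} is constant
  have hconst : ∀ i, 1 ≤ i → LynessG a (e+4) i = LynessG a (e+4) (i+1) := by
    intro i hi
    have e1 : LynessG a (e+5) i = LynessG a (e+4) i - a (i+(e+3)) * LynessG a (e+3) i := rfl
    have h2 : LynessG a (e+5) i
        = LynessG a (e+4) (i+1) - a i * LynessG a (e+3) (i+2) := dual (e+3) i
    rw [R i hi, mul_zero, sub_zero] at e1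
    rw [R (i+2) (by omega), mul_zero, sub_zero] at h2
    exact e1.symm.trans h2
  intro i hi
  have hc2 : LynessG a (e+4) i = LynessG a (e+4) (i+2) :=
    (hconst i hi).trans (hconst (i+1) (by omega))
  by_cases hz : LynessG a (e+2) (i+2) = 0
  · -- degenerate case : a(i+e+3) = 0
    have hGe1 : LynessG a (e+1) (i+2) ≠ 0 := hG0 (e+1) le_rfl (i+2) (by omega)
    have e1 : LynessG a (e+3) (i+2)
        = LynessG a (e+2) (i+2) - a (i+2+(e+1)) * LynessG a (e+1) (i+2) := rfl
    rw [R (i+2) (by omega), hz, zero_sub] at e1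
    have hz3 : a (i+2+(e+1)) = 0 := by
      have hmul : a (i+2+(e+1)) * LynessG a (e+1) (i+2) = 0 := by linear_combination e1
      rcases mul_eq_zero.1 hmul with h | h
      · exact h
      · exact absurd h hGe1
    -- a (i+e+4) = 1
    have h5 : a (i+3+(e+1)) = 1 - a (i+3+e) / contFrac e (fun k => a (i+3+k-1)) :=
      hrec (i+3) (by omega)
    have hz3' : a (i+3+e) = 0 := by
      have hix : i+3+e = i+2+(e+1) := by omega
      rw [hix]; exact hz3
    rw [hz3', zero_div, sub_zero] at h5
    -- LynessG a (e+2) (i+3) is nonzero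
    have e2 : LynessG a (e+3) (i+3)
        = LynessG a (e+2) (i+3) - a (i+3+(e+1)) * LynessG a (e+1) (i+3) := rfl
    rw [R (i+3) (by omega), h5, one_mul] at e2
    have hne3 : LynessG a (e+2) (i+3) ≠ 0 := by
      intro h
      rw [h, zero_sub] at e2
      exact hG0 (e+1) le_rfl (i+3) (by omega) (by linear_combination e2)
    -- a (i+1) = 0
    have hs1 : LynessG a (e+4) (i+1) = -(a (i+1) * LynessG a (e+2) (i+3)) :=
      hstar (i+1) (by omega)
    have hf2 : LynessG a (e+4) (i+2) = -(a (i+2+(e+2)) * LynessG a (e+2) (i+2)) :=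
      hF4 (i+2) (by omega)
    rw [hz, mul_zero, neg_zero] at hf2
    have hc1 : LynessG a (e+4) (i+1) = LynessG a (e+4) (i+2) := hconst (i+1) (by omega)
    have ha1 : a (i+1) = 0 := by
      have hmul : a (i+1) * LynessG a (e+2) (i+3) = 0 := by
        have := hs1.symm.trans (hc1.trans hf2)
        linear_combination -this
      rcases mul_eq_zero.1 hmul with h | h
      · exact h
      · exact absurd h hne3
    -- a i = 1
    have d1 : LynessG a (e+2) (i+1)
        = LynessG a (e+1) (i+2) - a (i+1) * LynessG a e (i+3) := dual e (i+1)
    rw [ha1, zero_mul, sub_zero] at d1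
    have d2 : LynessG a (e+3) i
        = LynessG a (e+2) (i+1) - a i * LynessG a (e+1) (i+2) := dual (e+1) i
    rw [R i hi, d1] at d2
    have hai : a i = 1 := by
      have hmul : (1 - a i) * LynessG a (e+1) (i+2) = 0 := by linear_combination -d2
      rcases mul_eq_zero.1 hmul with h | h
      · linear_combination -h
      · exact absurd h hGe1
    have hix : i + (e+2) + 2 = i + 3 + (e+1) := by omega
    rw [hix, h5, hai]
  · -- generic case
    have hs : LynessG a (e+4) i = -(a i * LynessG a (e+2) (i+2)) := hstar i hi
    have hf : LynessG a (e+4) (i+2) = -(a (i+2+(e+2)) * LynessG a (e+2) (i+2)) :=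
      hF4 (i+2) (by omega)
    have hmul : a (i+2+(e+2)) * LynessG a (e+2) (i+2) = a i * LynessG a (e+2) (i+2) := by
      have := hs.symm.trans (hc2.trans hf)
      linear_combination this
    have := mul_right_cancel₀ hz hmul
    have hix : i + (e+2) + 2 = i + 2 + (e+2) := by omega
    rw [hix, this]
end

section
/- Let x_1,...,x_{d+2} be distinct elements of a field and set x_{i+d+2} = x_i. Define a_i = C(x_i, x_{i+1}, x_{i+2}, x_{i+3}) where C is the cross-ratio C(a,b,c,d) = (a-b)(c-d)/((a-c)(b-d)). Then for every i, the depth-(d-1) continued fraction identity a_{i+d-1} = 1 - a_{i+d-2}/(1 - a_{i+d-3}/(⋯/(1 - a_i))) holds (whenever all denominators are nonzero). In particular, the sequence (a_i) satisfies the Lyness recurrence and is (d+2)-periodic. -/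
/-- The cross-ratio `C(a,b,c,d) = (a-b)(c-d)/((a-c)(b-d))` of four elements of a field. -/
def crossRatio {K : Type*} [Field K] (a b c d : K) : K :=
  (a - b) * (c - d) / ((a - c) * (b - d))

/-- Let `d ≥ 2`, let `x_1, ..., x_{d+2}` be distinct elements of a field, extended
cyclically by `x_{i+d+2} = x_i`, and let `a_i = C(x_i, x_{i+1}, x_{i+2}, x_{i+3})`.
Then for every `i ≥ 1`, whenever all intermediate denominators are nonzero,
the depth-`(d-1)` continued fraction identity
`a_{i+d-1} = 1 - a_{i+d-2}/(1 - a_{i+d-3}/(⋯/(1 - a_i)))` holds; in particular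
the sequence `(a_i)` satisfies the Lyness recurrence and is `(d+2)`-periodic. -/
theorem crossRatio_lyness {K : Type*} [Field K] (d : ℕ) (hd : 2 ≤ d) (x : ℕ → K)
    (hcyc : ∀ i, x (i + (d + 2)) = x i)
    (hdist : ∀ i j, 1 ≤ i → i < j → j ≤ d + 2 → x i ≠ x j) :
    (∀ i, 1 ≤ i →
      (∀ j, j ≤ d - 2 →
        contFrac j (fun k => crossRatio (x (i + k - 1)) (x (i + k)) (x (i + k + 1)) (x (i + k + 2))) ≠ 0) →
      crossRatio (x (i + d - 1)) (x (i + d)) (x (i + d + 1)) (x (i + d + 2)) =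
        contFrac (d - 1) (fun k => crossRatio (x (i + k - 1)) (x (i + k)) (x (i + k + 1)) (x (i + k + 2)))) ∧
    (∀ i, 1 ≤ i →
      crossRatio (x (i + d + 2)) (x (i + d + 3)) (x (i + d + 4)) (x (i + d + 5)) =
        crossRatio (x i) (x (i + 1)) (x (i + 2)) (x (i + 3))) := by
  -- periodicity for multiples of the period
  have hper : ∀ m q, x (m + q * (d + 2)) = x m := by
    intro m q
    induction q with
    | zero => simp
    | succ q ih =>
      rw [show m + (q + 1) * (d + 2) = m + q * (d + 2) + (d + 2) by ring, hcyc, ih]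
  -- distinctness within any window of length d+2
  have hne : ∀ m r, 1 ≤ m → 1 ≤ r → r ≤ d + 1 → x m ≠ x (m + r) := by
    intro m r hm hr hrd
    obtain ⟨q, t, htlt, hmt⟩ : ∃ q t, t < d + 2 ∧ m - 1 = q * (d + 2) + t :=
      ⟨(m - 1) / (d + 2), (m - 1) % (d + 2), Nat.mod_lt _ (by omega),
        (Nat.div_add_mod' _ _).symm⟩
    have hxm : x m = x (t + 1) := by rw [show m = (t + 1) + q * (d + 2) by omega, hper]
    by_cases h : t + 1 + r ≤ d + 2
    · have hxr : x (m + r) = x (t + 1 + r) := by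
        rw [show m + r = (t + 1 + r) + q * (d + 2) by omega, hper]
      rw [hxm, hxr]
      exact hdist (t + 1) (t + 1 + r) (by omega) (by omega) h
    · have hxr : x (m + r) = x (t + 1 + r - (d + 2)) := by
        rw [show m + r = ((t + 1 + r - (d + 2)) + (d + 2)) + q * (d + 2) by omega, hper, hcyc]
      rw [hxm, hxr]
      exact (hdist (t + 1 + r - (d + 2)) (t + 1) (by omega) (by omega) (by omega)).symm
  have hsub : ∀ m r, 1 ≤ m → 1 ≤ r → r ≤ d + 1 → x m - x (m + r) ≠ 0 :=
    fun m r a b c => sub_ne_zero.mpr (hne m r a b c)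
  -- closed form for the continued fraction
  have key : ∀ i, 1 ≤ i → ∀ j, j ≤ d - 1 →
      contFrac j (fun k => crossRatio (x (i + k - 1)) (x (i + k)) (x (i + k + 1)) (x (i + k + 2))) =
        ((x (i + j) - x (i + j + 1)) * (x i - x (i + j + 2))) /
          ((x i - x (i + j + 1)) * (x (i + j) - x (i + j + 2))) := by
    intro i hi j
    induction j with
    | zero =>
      intro _
      simp only [contFrac, Nat.add_zero]
      exact (div_self (mul_ne_zero (hsub i 1 hi le_rfl (by omega))
        (hsub i 2 hi (by omega) (by omega)))).symm
    | succ j ih =>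
      intro hj
      have ihj := ih (by omega)
      simp only [contFrac]
      rw [ihj]
      rw [show i + (j + 1) - 1 = i + j by omega]
      rw [show i + (j + 1) = i + j + 1 by omega]
      rw [show i + j + 1 + 1 = i + j + 2 by omega]
      rw [show i + j + 1 + 2 = i + j + 3 by omega]
      simp only [crossRatio]
      have n1 : x (i + j) - x (i + j + 1) ≠ 0 := hsub (i + j) 1 (by omega) le_rfl (by omega)
      have n2 : x i - x (i + j + 2) ≠ 0 := hsub i (j + 2) hi (by omega) (by omega)
      have n3 : x i - x (i + j + 1) ≠ 0 := hsub i (j + 1) hi (by omega) (by omega)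
      have n4 : x (i + j) - x (i + j + 2) ≠ 0 := hsub (i + j) 2 (by omega) (by omega) (by omega)
      have n5 : x (i + j + 1) - x (i + j + 3) ≠ 0 := by
        have := hsub (i + j + 1) 2 (by omega) (by omega) (by omega)
        rwa [show i + j + 1 + 2 = i + j + 3 by omega] at this
      field_simp
      ring
  refine ⟨?_, ?_⟩
  · intro i hi _
    rw [key i hi (d - 1) le_rfl]
    rw [show i + (d - 1) = i + d - 1 by omega]
    rw [show i + d - 1 + 1 = i + d by omega]
    rw [show i + d - 1 + 2 = i + d + 1 by omega]
    rw [show x (i + d + 2) = x i by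
      rw [show i + d + 2 = i + (d + 2) by omega]; exact hcyc i]
    simp only [crossRatio]
    have n1 : x (i + d - 1) - x (i + d + 1) ≠ 0 := by
      have := hsub (i + d - 1) 2 (by omega) (by omega) (by omega)
      rwa [show i + d - 1 + 2 = i + d + 1 by omega] at this
    have n2 : x (i + d) - x i ≠ 0 :=
      sub_ne_zero.mpr (hne i d hi (by omega) (by omega)).symm
    have n3 : x i - x (i + d) ≠ 0 := hsub i d hi (by omega) (by omega)
    field_simp
    ring
  · intro i hi
    have e0 : x (i + d + 2) = x i := by
      rw [show i + d + 2 = i + (d + 2) by omega]; exact hcyc i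
    have e1 : x (i + d + 3) = x (i + 1) := by
      rw [show i + d + 3 = (i + 1) + (d + 2) by omega]; exact hcyc (i + 1)
    have e2 : x (i + d + 4) = x (i + 2) := by
      rw [show i + d + 4 = (i + 2) + (d + 2) by omega]; exact hcyc (i + 2)
    have e3 : x (i + d + 5) = x (i + 3) := by
      rw [show i + d + 5 = (i + 3) + (d + 2) by omega]; exact hcyc (i + 3)
    rw [e0, e1, e2, e3]
end
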